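/- Let Z > 0 be a positive definite matrix with largest eigenvalue a and smallest eigenvalue b. Then for every unit vector h, ‖Zh‖ ≤ ((a+b)/(2√(ab)))·⟨h, Zh⟩. -/

import Mathlib

/-!
In an orthonormal eigenbasis of `Z` with coordinates `cᵢ` and eigenvalues `λᵢ ∈ [b, a]`,
`(a - λᵢ)(λᵢ - b) ≥ 0` summed against `|cᵢ|²` gives `‖Zh‖² + ab ≤ (a + b)⟨h, Zh⟩`.
Writing `t = ⟨h, Zh⟩`, AM-GM in the form `(a + b)t - ab ≤ ((a + b)t)² / (4ab)` then yields
`‖Zh‖ ≤ (a + b) t / (2√(ab))`.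
-/

open Matrix ComplexOrder

namespace LinearMap.IsSymmetric

variable {𝕜 E : Type*} [RCLike 𝕜] [NormedAddCommGroup E] [InnerProductSpace 𝕜 E]
  [FiniteDimensional 𝕜 E] {T : E →ₗ[𝕜] E} (hT : T.IsSymmetric) {n : ℕ}
  (hn : Module.finrank 𝕜 E = n)

theorem norm_apply_sq_eq_sum_eigenvalues (x : E) :
    ‖T x‖ ^ 2 = ∑ i, hT.eigenvalues hn i ^ 2 * ‖(hT.eigenvectorBasis hn).repr x i‖ ^ 2 := by
  rw [← LinearIsometryEquiv.norm_map (hT.eigenvectorBasis hn).repr, EuclideanSpace.norm_sq_eq]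
  simp only [eigenvectorBasis_apply_self_apply, norm_mul, RCLike.norm_ofReal, mul_pow, sq_abs]

theorem re_inner_apply_self_eq_sum_eigenvalues (x : E) :
    RCLike.re (inner 𝕜 x (T x)) =
      ∑ i, hT.eigenvalues hn i * ‖(hT.eigenvectorBasis hn).repr x i‖ ^ 2 := by
  rw [← LinearIsometryEquiv.inner_map_map (hT.eigenvectorBasis hn).repr, PiLp.inner_apply,
    map_sum]
  refine Finset.sum_congr rfl fun i _ => ?_
  rw [eigenvectorBasis_apply_self_apply, RCLike.inner_apply, mul_assoc, RCLike.mul_conj]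
  norm_cast

theorem norm_apply_sq_add_mul_norm_sq_le {a b : ℝ} (ha : ∀ i, hT.eigenvalues hn i ≤ a)
    (hb : ∀ i, b ≤ hT.eigenvalues hn i) (x : E) :
    ‖T x‖ ^ 2 + a * b * ‖x‖ ^ 2 ≤ (a + b) * RCLike.re (inner 𝕜 x (T x)) := by
  rw [hT.norm_apply_sq_eq_sum_eigenvalues hn, ← (hT.eigenvectorBasis hn).repr.norm_map x,
    EuclideanSpace.norm_sq_eq, hT.re_inner_apply_self_eq_sum_eigenvalues hn, Finset.mul_sum,
    Finset.mul_sum, ← Finset.sum_add_distrib]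
  refine Finset.sum_le_sum fun i _ => ?_
  have hfactor : 0 ≤ (a - hT.eigenvalues hn i) * (hT.eigenvalues hn i - b) :=
    mul_nonneg (sub_nonneg.2 (ha i)) (sub_nonneg.2 (hb i))
  nlinarith [mul_nonneg hfactor (sq_nonneg ‖(hT.eigenvectorBasis hn).repr x i‖)]

end LinearMap.IsSymmetric

theorem le_div_two_sqrt_mul_of_sq_add_mul_le {a b s t : ℝ} (ha : 0 < a) (hb : 0 < b)
    (hs : 0 ≤ s) (hst : s ^ 2 + a * b ≤ (a + b) * t) :
    s ≤ (a + b) / (2 * √(a * b)) * t := by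
  have hab : 0 < √(a * b) := Real.sqrt_pos.2 (mul_pos ha hb)
  rw [div_mul_eq_mul_div, le_div_iff₀ (by positivity)]
  have ht : 0 ≤ (a + b) * t := by nlinarith [mul_pos ha hb]
  refine (pow_le_pow_iff_left₀ (by positivity) ht two_ne_zero).1 ?_
  calc (s * (2 * √(a * b))) ^ 2 = 4 * (a * b) * s ^ 2 := by
        rw [mul_pow, mul_pow, Real.sq_sqrt (mul_pos ha hb).le]; ring
    _ ≤ 4 * (a * b) * ((a + b) * t - a * b) := by gcongr; linarith
    _ ≤ ((a + b) * t) ^ 2 := by nlinarith [sq_nonneg ((a + b) * t - 2 * (a * b))]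

theorem Matrix.IsHermitian.eigenvalues₀_mem_range_eigenvalues {𝕜 ι : Type*} [RCLike 𝕜]
    [Fintype ι] [DecidableEq ι] {A : Matrix ι ι 𝕜} (hA : A.IsHermitian)
    (j : Fin (Fintype.card ι)) : hA.eigenvalues₀ j ∈ Set.range hA.eigenvalues :=
  ⟨Fintype.equivOfCardEq (Fintype.card_fin _) j, by simp [Matrix.IsHermitian.eigenvalues]⟩

theorem kantorovich_vector {n : ℕ} (Z : Matrix (Fin n) (Fin n) ℂ) (hZ : Z.PosDef)
    (a b : ℝ)
    (ha : IsGreatest (Set.range hZ.1.eigenvalues) a)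
    (hb : IsLeast (Set.range hZ.1.eigenvalues) b)
    (h : EuclideanSpace ℂ (Fin n)) (hh : ‖h‖ = 1) :
    ‖Matrix.toEuclideanLin Z h‖ ≤
      (a + b) / (2 * Real.sqrt (a * b)) * (inner ℂ h (Matrix.toEuclideanLin Z h) : ℂ).re := by
  obtain ⟨i, rfl⟩ := hb.1
  have hb_pos : 0 < hZ.1.eigenvalues i := hZ.eigenvalues_pos i
  have ha_pos : 0 < a := hb_pos.trans_le (ha.2 ⟨i, rfl⟩)
  have hT := isSymmetric_toEuclideanLin_iff.mpr hZ.1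
  have hquad := hT.norm_apply_sq_add_mul_norm_sq_le finrank_euclideanSpace
    (fun j => ha.2 (hZ.1.eigenvalues₀_mem_range_eigenvalues j))
    (fun j => hb.2 (hZ.1.eigenvalues₀_mem_range_eigenvalues j)) h
  rw [hh, one_pow, mul_one] at hquad
  exact le_div_two_sqrt_mul_of_sq_add_mul_le ha_pos hb_pos (norm_nonneg _) hquad
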